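/- Let M and N be matroids with finite disjoint ground sets S and T, let L be the free product M □ N, and let U ⊆ S ∪ T with |U| = |S| and rk_L(U) = rk(M). Then either every element of S \ U is an isthmus (coloop) of M, or every element of U ∩ T is a loop of N. -/

import Mathlib

open Set Matroid

/-- The rank of a set `X` in a matroid `M`: the maximum cardinality of an
independent subset of `X`.  For `X = M.E` this is the rank of `M`. -/
noncomputable def mrk {α : Type*} (M : Matroid α) (X : Set α) : ℕ :=
  sSup (Set.ncard '' {I | M.Indep I ∧ I ⊆ X})

/-- A loop of a matroid `N` is an element contained in no independent set of `N`. -/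
def IsLoopOf {α : Type*} (N : Matroid α) (e : α) : Prop := ∀ I, N.Indep I → e ∉ I

/-- An isthmus (coloop) of a matroid `M` is an element contained in every basis of `M`. -/
def IsIsthmusOf {α : Type*} (M : Matroid α) (e : α) : Prop := ∀ B, M.IsBase B → e ∈ B

/-!
Write `A = U ∩ S`, `B = U ∩ T`, `r = rk(M)`; then `|B| = |S \ U|`. Adjoining to a basis `I` of `A`
any `K ⊆ B` whose nullity is at most `λ_M(I) = r - rk_M(A)` gives an `L`-independent subset of `U`,
so `rk_M(A) + |K| ≤ rk_L(U) = r`. If the nullity of `B` is below `r - rk_M(A)`, take `K = B`: then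
`rk_M(A) + |S \ U| ≤ r`, and deleting any `e ∈ S \ U` lowers the rank, so `e` is an isthmus.
Otherwise take `K` to be a basis of `B` padded with `r - rk_M(A)` further elements of `B`: then
`rk_M(A) + rk_N(B) + (r - rk_M(A)) ≤ r`, so `rk_N(B) = 0` and all of `B` consists of loops.
-/

namespace Matroid

variable {α : Type*} {M : Matroid α} {B I X Y : Set α} {e : α}

lemma bddAbove_ncard_indep_subset (hX : X.Finite) :
    BddAbove (Set.ncard '' {I | M.Indep I ∧ I ⊆ X}) :=
  ⟨X.ncard, by rintro _ ⟨I, ⟨-, hIX⟩, rfl⟩; exact ncard_le_ncard hIX hX⟩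

lemma Indep.ncard_le_mrk (hX : X.Finite) (hI : M.Indep I) (hIX : I ⊆ X) :
    I.ncard ≤ mrk M X :=
  le_csSup (bddAbove_ncard_indep_subset hX) ⟨I, ⟨hI, hIX⟩, rfl⟩

lemma exists_indep_subset_ncard_eq_mrk (M : Matroid α) (hX : X.Finite) :
    ∃ I ⊆ X, M.Indep I ∧ I.ncard = mrk M X := by
  have hmem : mrk M X ∈ Set.ncard '' {I | M.Indep I ∧ I ⊆ X} :=
    Nat.sSup_mem ⟨0, ∅, ⟨M.empty_indep, empty_subset X⟩, ncard_empty α⟩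
      (bddAbove_ncard_indep_subset hX)
  obtain ⟨I, ⟨hI, hIX⟩, hcard⟩ := hmem
  exact ⟨I, hIX, hI, hcard⟩

lemma Indep.mrk_eq_ncard (hI : M.Indep I) (hIfin : I.Finite) : mrk M I = I.ncard := by
  obtain ⟨J, hJI, -, hJ⟩ := M.exists_indep_subset_ncard_eq_mrk hIfin
  exact le_antisymm (hJ ▸ ncard_le_ncard hJI hIfin) (hI.ncard_le_mrk hIfin subset_rfl)

lemma mrk_mono (hY : Y.Finite) (hXY : X ⊆ Y) : mrk M X ≤ mrk M Y := by
  obtain ⟨I, hIX, hI, hcard⟩ := M.exists_indep_subset_ncard_eq_mrk (hY.subset hXY)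
  exact hcard ▸ hI.ncard_le_mrk hY (hIX.trans hXY)

lemma mrk_le_mrk_inter_add_ncard_sdiff (hX : X.Finite) (Y : Set α) :
    mrk M X ≤ mrk M (X ∩ Y) + (X \ Y).ncard := by
  obtain ⟨I, hIX, hI, hcard⟩ := M.exists_indep_subset_ncard_eq_mrk hX
  have hinter : (I ∩ Y).ncard ≤ mrk M (X ∩ Y) :=
    (hI.subset inter_subset_left).ncard_le_mrk (hX.inter_of_left Y)
      (inter_subset_inter_left Y hIX)
  have hsdiff : (I \ Y).ncard ≤ (X \ Y).ncard :=
    ncard_le_ncard (sdiff_subset_sdiff_left hIX) hX.sdiff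
  have := ncard_inter_add_ncard_sdiff_eq_ncard I Y (hX.subset hIX)
  omega

lemma IsBase.ncard_eq_mrk_ground (hE : M.E.Finite) (hB : M.IsBase B) :
    B.ncard = mrk M M.E := by
  obtain ⟨I, -, hI, hcard⟩ := M.exists_indep_subset_ncard_eq_mrk hE
  obtain ⟨B', hB', hIB'⟩ := hI.exists_isBase_superset
  refine le_antisymm (hB.indep.ncard_le_mrk hE hB.subset_ground) ?_
  rw [← hcard, hB.ncard_eq_ncard_of_isBase hB']
  exact ncard_le_ncard hIB' (hE.subset hB'.subset_ground)

lemma isIsthmusOf_of_mrk_sdiff_singleton_lt (hE : M.E.Finite)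
    (h : mrk M (M.E \ {e}) < mrk M M.E) : IsIsthmusOf M e := by
  intro B hB
  by_contra heB
  have := hB.indep.ncard_le_mrk hE.sdiff (subset_sdiff_singleton hB.subset_ground heB)
  rw [hB.ncard_eq_mrk_ground hE] at this
  omega

lemma isIsthmusOf_of_mrk_add_ncard_sdiff_le (hE : M.E.Finite)
    (h : mrk M (Y ∩ M.E) + (M.E \ Y).ncard ≤ mrk M M.E) (he : e ∈ M.E \ Y) :
    IsIsthmusOf M e := by
  refine isIsthmusOf_of_mrk_sdiff_singleton_lt hE ?_
  have hsplit := M.mrk_le_mrk_inter_add_ncard_sdiff (hE.sdiff (t := {e})) Y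
  have hinter : mrk M ((M.E \ {e}) ∩ Y) ≤ mrk M (Y ∩ M.E) :=
    mrk_mono (hE.inter_of_right Y) fun x hx => ⟨hx.2, hx.1.1⟩
  have hsdiff : ((M.E \ {e}) \ Y).ncard + 1 = (M.E \ Y).ncard := by
    rw [sdiff_sdiff_comm]
    exact ncard_sdiff_singleton_add_one he hE.sdiff
  omega

lemma isLoopOf_of_mrk_eq_zero (hX : X.Finite) (heX : e ∈ X) (h : mrk M X = 0) :
    IsLoopOf M e := by
  intro I hI heI
  have := (hI.subset (singleton_subset_iff.2 heI)).ncard_le_mrk hX (singleton_subset_iff.2 heX)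
  rw [ncard_singleton, h] at this
  omega

end Matroid

section FreeProduct

variable {α : Type*} {M N L : Matroid α} {S T U I K : Set α}

def IsFreeProduct (L M N : Matroid α) (S T : Set α) : Prop :=
  ∀ A : Set α, L.Indep A ↔ A ⊆ S ∪ T ∧ M.Indep (A ∩ S) ∧
    (A ∩ T).ncard - mrk N (A ∩ T) ≤ mrk M S - mrk M (A ∩ S)

lemma IsFreeProduct.indep_union (hL : IsFreeProduct L M N S T) (hS : S.Finite)
    (hST : Disjoint S T) (hI : M.Indep I) (hIS : I ⊆ S) (hKT : K ⊆ T)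
    (hK : K.ncard - mrk N K ≤ mrk M S - I.ncard) : L.Indep (I ∪ K) := by
  have hS' : (I ∪ K) ∩ S = I := by
    rw [union_inter_distrib_right, inter_eq_left.2 hIS, (hST.symm.mono_left hKT).inter_eq,
      union_empty]
  have hT' : (I ∪ K) ∩ T = K := by
    rw [union_inter_distrib_right, (hST.mono_left hIS).inter_eq, inter_eq_left.2 hKT,
      empty_union]
  rw [hL, hS', hT', hI.mrk_eq_ncard (hS.subset hIS)]
  exact ⟨union_subset_union hIS hKT, hI, hK⟩

lemma IsFreeProduct.mrk_inter_add_ncard_le (hL : IsFreeProduct L M N S T) (hS : S.Finite)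
    (hT : T.Finite) (hST : Disjoint S T) (hU : U ⊆ S ∪ T) (hKU : K ⊆ U ∩ T)
    (hK : K.ncard - mrk N K ≤ mrk M S - mrk M (U ∩ S)) :
    mrk M (U ∩ S) + K.ncard ≤ mrk L U := by
  obtain ⟨I, hIU, hI, hIcard⟩ := 
    M.exists_indep_subset_ncard_eq_mrk (X := U ∩ S) (hS.subset inter_subset_right)
  have hIS : I ⊆ S := hIU.trans inter_subset_right
  have hKT : K ⊆ T := hKU.trans inter_subset_right
  have hindep : L.Indep (I ∪ K) := hL.indep_union hS hST hI hIS hKT (hIcard ▸ hK)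
  have hle := hindep.ncard_le_mrk ((hS.union hT).subset hU)
    (union_subset (hIU.trans inter_subset_left) (hKU.trans inter_subset_left))
  rwa [ncard_union_eq (hST.mono hIS hKT) (hS.subset hIS) (hT.subset hKT), hIcard] at hle

end FreeProduct

lemma ncard_inter_eq_ncard_sdiff_of_ncard_eq {α : Type*} {S T U : Set α} (hS : S.Finite)
    (hT : T.Finite) (hST : Disjoint S T) (hU : U ⊆ S ∪ T) (hUcard : U.ncard = S.ncard) :
    (U ∩ T).ncard = (S \ U).ncard := by
  have hUS : U \ S = U ∩ T := by
    ext x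
    constructor
    · exact fun ⟨hxU, hxS⟩ => ⟨hxU, (hU hxU).resolve_left hxS⟩
    · exact fun ⟨hxU, hxT⟩ => ⟨hxU, hST.notMem_of_mem_right hxT⟩
  have hUfin : U.Finite := (hS.union hT).subset hU
  have hUsplit := ncard_inter_add_ncard_sdiff_eq_ncard U S hUfin
  have hSsplit := ncard_inter_add_ncard_sdiff_eq_ncard S U hS
  rw [hUS] at hUsplit
  rw [inter_comm] at hSsplit
  omega

theorem stmt_8_general {α : Type*} (M N : Matroid α) (S T : Set α)
    (hS : S.Finite) (hT : T.Finite) (hMS : M.E = S)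
    (hST : Disjoint S T)
    (L : Matroid α)
    (hLI : ∀ A : Set α, L.Indep A ↔ A ⊆ S ∪ T ∧ M.Indep (A ∩ S) ∧
      (A ∩ T).ncard - mrk N (A ∩ T) ≤ mrk M S - mrk M (A ∩ S))
    (U : Set α) (hU : U ⊆ S ∪ T) (hUcard : U.ncard = S.ncard)
    (hrk : mrk L U = mrk M S) :
    (∀ e ∈ S \ U, IsIsthmusOf M e) ∨ (∀ e ∈ U ∩ T, IsLoopOf N e) := by
  have hL : IsFreeProduct L M N S T := hLI
  have hBfin : (U ∩ T).Finite := hT.subset inter_subset_right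
  by_cases hnullity : (U ∩ T).ncard - mrk N (U ∩ T) < mrk M S - mrk M (U ∩ S)
  · left
    have hle := hL.mrk_inter_add_ncard_le hS hT hST hU subset_rfl hnullity.le
    rw [hrk, ncard_inter_eq_ncard_sdiff_of_ncard_eq hS hT hST hU hUcard] at hle
    subst hMS
    exact fun e he => isIsthmusOf_of_mrk_add_ncard_sdiff_le hS hle he
  · right
    obtain ⟨J, hJB, hJ, hJcard⟩ := N.exists_indep_subset_ncard_eq_mrk hBfin
    have hJcard_le : J.ncard ≤ (U ∩ T).ncard := ncard_le_ncard hJB hBfin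
    obtain ⟨K, hJK, hKB, hKcard⟩ := exists_subsuperset_card_eq hJB
      (n := mrk N (U ∩ T) + (mrk M S - mrk M (U ∩ S))) (by omega) (by omega)
    have hJrk := hJ.ncard_le_mrk (hBfin.subset hKB) hJK
    have hle := hL.mrk_inter_add_ncard_le hS hT hST hU hKB (by omega)
    have hmono : mrk M (U ∩ S) ≤ mrk M S := mrk_mono hS inter_subset_right
    exact fun e he => isLoopOf_of_mrk_eq_zero hBfin he (by omega)

/-- If `L = M □ N`, `U ⊆ S ∪ T`, `|U| = |S|` and `rk_L(U) = rk(M)`, then either every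
element of `S \ U` is an isthmus of `M`, or every element of `U ∩ T` is a loop of `N`. -/
theorem stmt_8 {α : Type*} (M N : Matroid α) (S T : Set α)
    (hS : S.Finite) (hT : T.Finite) (hMS : M.E = S) (hNT : N.E = T)
    (hST : Disjoint S T)
    (L : Matroid α) (hLE : L.E = S ∪ T)
    (hLI : ∀ A : Set α, L.Indep A ↔ A ⊆ S ∪ T ∧ M.Indep (A ∩ S) ∧
      (A ∩ T).ncard - mrk N (A ∩ T) ≤ mrk M S - mrk M (A ∩ S))
    (U : Set α) (hU : U ⊆ S ∪ T) (hUcard : U.ncard = S.ncard)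
    (hrk : mrk L U = mrk M S) :
    (∀ e ∈ S \ U, IsIsthmusOf M e) ∨ (∀ e ∈ U ∩ T, IsLoopOf N e) :=
  stmt_8_general M N S T hS hT hMS hST L hLI U hU hUcard hrk
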